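/- Assume Constraints I and IVb, and that ε ≤ 1/3. Then Φ(λ) ≥ 1 + 3ε/4 for every λ ∈ (0,1]. -/

import Mathlib

/-- The degree-`d` Chebyshev polynomial of the first kind, as a real function. -/
noncomputable def cheb : ℕ → ℝ → ℝ
  | 0, _ => 1
  | 1, x => x
  | (n+2), x => 2 * x * cheb (n+1) x - cheb n x

/-- `ψ(x) = (r+ℓ−2x)/(r−ℓ)`. -/
noncomputable def psiMap (ℓ r x : ℝ) : ℝ := (r + ℓ - 2 * x) / (r - ℓ)

/-- `δ = 1 / T_d(1 + 2α/(1−α))` where `α = ℓ/r`. -/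
noncomputable def cDelta (ℓ r : ℝ) (d : ℕ) : ℝ :=
  1 / cheb d (1 + 2 * (ℓ / r) / (1 - ℓ / r))

/-- `P_d(x) = −δ·T_d(ψ(x))`. -/
noncomputable def Pd (ℓ r : ℝ) (d : ℕ) (x : ℝ) : ℝ := - cDelta ℓ r d * cheb d (psiMap ℓ r x)

/-- `Q(x) = 1 + e^{−mx}·P_d(x)`. -/
noncomputable def Qfun (ℓ r : ℝ) (d : ℕ) (m x : ℝ) : ℝ :=
  1 + Real.exp (-(m * x)) * Pd ℓ r d x

/-- `Q*(x) = 1 + P_d(x)` for `x < ℓ` and `1 − δ` for `x ≥ ℓ`. -/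
noncomputable def Qstar (ℓ r : ℝ) (d : ℕ) (x : ℝ) : ℝ :=
  if x < ℓ then 1 + Pd ℓ r d x else 1 - cDelta ℓ r d

/-- Constraint I: `r ≥ 3ℓ` and `d ≥ 4·√((r−ℓ)/(2ℓ))·ln(20/ε)`. -/
def ConstraintI (ℓ r : ℝ) (d : ℕ) (ε : ℝ) : Prop :=
  r ≥ 3 * ℓ ∧ (d : ℝ) ≥ 4 * Real.sqrt ((r - ℓ) / (2 * ℓ)) * Real.log (20 / ε)

/-- Constraint II: `m ≥ 5.5·d/(r−ℓ)`. -/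
def ConstraintII (ℓ r : ℝ) (d : ℕ) (m : ℝ) : Prop :=
  m ≥ 5.5 * d / (r - ℓ)

/-- Constraint III: `m ≤ ε²n²/256` and
`d⁶·9^d·((r+ℓ)/(r−ℓ))^{2d−2} ≤ (1/4)·m·(r−ℓ)²·n²`. -/
def ConstraintIII (ℓ r : ℝ) (d : ℕ) (m ε : ℝ) (n : ℕ) : Prop :=
  m ≤ ε ^ 2 * (n : ℝ) ^ 2 / 256 ∧
  (d : ℝ) ^ 6 * 9 ^ d * ((r + ℓ) / (r - ℓ)) ^ (2 * d - 2) ≤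
    (1 / 4) * m * (r - ℓ) ^ 2 * (n : ℝ) ^ 2

/-- Constraint IV: `ℓ ≤ ε/(20n)`. -/
def ConstraintIV (ℓ ε : ℝ) (n : ℕ) : Prop := ℓ ≤ ε / (20 * n)

/-- Constraint IVb: `ℓ ≤ (1/3)·(ε/n)·log₂(1/ε)`. -/
def ConstraintIVb (ℓ ε : ℝ) (n : ℕ) : Prop :=
  ℓ ≤ (1 / 3) * (ε / n) * Real.logb 2 (1 / ε)

/-- A probability distribution over `ℕ`: a nonnegative sequence summing to `1`. -/
def IsDist (p : ℕ → ℝ) : Prop := (∀ i, 0 ≤ p i) ∧ ∑' i, p i = 1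

/-- Total variation distance `(1/2)·Σᵢ|p_i − q_i|`. -/
noncomputable def dTV (p q : ℕ → ℝ) : ℝ := (1 / 2) * ∑' i, |p i - q i|

/-- `p` is `ε`-far from having support size at most `n`. -/
def FarFromSuppSize (ε : ℝ) (n : ℕ) (p : ℕ → ℝ) : Prop :=
  ∀ q : ℕ → ℝ, IsDist q → {i | q i ≠ 0}.encard ≤ n → dTV p q > ε

/-- `Φ(λ) = (1 + ε/(λ·ℓ·n))·Q*(λ·ℓ)`. -/
noncomputable def Phi (ℓ r : ℝ) (d : ℕ) (ε : ℝ) (n : ℕ) (lam : ℝ) : ℝ :=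
  (1 + ε / (lam * ℓ * n)) * Qstar ℓ r d (lam * ℓ)

lemma two_cosh_mul (a b : ℝ) :
    2 * Real.cosh a * Real.cosh b = Real.cosh (a + b) + Real.cosh (a - b) := by
  rw [Real.cosh_add, Real.cosh_sub]; ring

lemma cheb_cosh : ∀ (n : ℕ) (t : ℝ), cheb n (Real.cosh t) = Real.cosh (n * t)
  | 0, t => by simp [cheb]
  | 1, t => by simp [cheb]
  | (n+2), t => by
    rw [cheb, cheb_cosh (n+1) t, cheb_cosh n t]
    have h := two_cosh_mul (((n:ℝ)+1) * t) t
    push_cast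
    have h1 : ((n:ℝ)+1)*t + t = ((n:ℝ)+2)*t := by ring
    have h2 : ((n:ℝ)+1)*t - t = (n:ℝ)*t := by ring
    rw [h1, h2] at h
    linarith

lemma cosh_log_g (ℓ r y : ℝ) (hl : 0 < ℓ) (hlr : ℓ < r) (hy0 : 0 ≤ y) (hy : y ≤ ℓ) :
    Real.cosh (Real.log ((Real.sqrt (r - y) + Real.sqrt (ℓ - y))^2 / (r - ℓ)))
      = psiMap ℓ r y := by
  set s := Real.sqrt (r - y) with hsdef
  set t := Real.sqrt (ℓ - y) with htdef
  have hs2 : s^2 = r - y := Real.sq_sqrt (by linarith)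
  have ht2 : t^2 = ℓ - y := Real.sq_sqrt (by linarith)
  have hs : 0 < s := Real.sqrt_pos.2 (by linarith)
  have ht : 0 ≤ t := Real.sqrt_nonneg _
  have hst : 0 < s + t := by linarith
  have hr' : r = s^2 + y := by linarith
  have hl' : ℓ = t^2 + y := by linarith
  have hstn : s^2 - t^2 > 0 := by nlinarith
  rw [hr', hl']
  have hg : (0:ℝ) < (s+t)^2 / (s^2 + y - (t^2+y)) := by
    apply div_pos (by positivity); linarith
  rw [Real.cosh_eq, Real.exp_log hg, Real.exp_neg, Real.exp_log hg]
  unfold psiMap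
  have h1 : s + t ≠ 0 := ne_of_gt hst
  have h2 : s^2 + y - (t^2 + y) ≠ 0 := by intro h; nlinarith
  field_simp
  ring

lemma cosh_ratio_bound (A C : ℝ) (h0 : 0 ≤ C) (h : C ≤ A) :
    (1 - Real.exp (C - A)) * (1 - 2*Real.exp (-A)) ≤ 1 - Real.cosh C / Real.cosh A := by
  set q := Real.exp C with hqdef
  set a := Real.exp (-A) with hadef
  set c := Real.exp (-C) with hcdef
  have hq1 : 1 ≤ q := Real.one_le_exp h0
  have ha : 0 < a := Real.exp_pos _
  have ha1 : a ≤ 1 := Real.exp_le_one_iff.2 (by linarith)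
  have hc : 0 < c := Real.exp_pos _
  have hqc : q * c = 1 := by rw [hqdef, hcdef, ← Real.exp_add]; simp
  have hqa : q * a ≤ 1 := by
    rw [hqdef, hadef, ← Real.exp_add]
    exact Real.exp_le_one_iff.2 (by linarith)
  have hCA : Real.exp (C - A) = q * a := by
    rw [hqdef, hadef, ← Real.exp_add, sub_eq_add_neg]
  have hcoshA : Real.cosh A = (1/a + a)/2 := by
    rw [Real.cosh_eq, hadef, Real.exp_neg]; field_simp
  have hcoshC : Real.cosh C = (q + c)/2 := by rw [Real.cosh_eq]
  rw [hCA, hcoshA, hcoshC]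
  have f1 : 0 ≤ 1 - q*a := by linarith
  have hq0 : 0 < q := by linarith
  have h5 : q * a ≤ q := by nlinarith
  have h6 : (0:ℝ) ≤ 2*q - 1 - q*a := by linarith
  have f2 : 0 ≤ 2*q*a + 2*q*a^3 - a - q*a^2 := by
    nlinarith [mul_nonneg ha.le h6, mul_nonneg (mul_nonneg hq0.le ha.le) (sq_nonneg a)]
  have keyA : (q + c)*a ≤ (1 - (1-q*a)*(1-2*a)) * (1 + a*a) := by
    nlinarith [mul_nonneg f1 f2, mul_pos hq0 ha, hqc]
  have key : (q + c)/2 ≤ (1 - (1-q*a)*(1-2*a)) * ((1/a + a)/2) := by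
    have keyA' : (q + c) ≤ ((1 - (1-q*a)*(1-2*a)) * (1 + a*a))/a := (le_div_iff₀ ha).2 keyA
    have : (1 - (1-q*a)*(1-2*a)) * ((1/a + a)/2) = ((1 - (1-q*a)*(1-2*a)) * (1 + a*a))/a/2 := by
      field_simp
    rw [this]
    linarith [keyA']
  have hden : (0:ℝ) < (1/a + a)/2 := by positivity
  have h2 : (q + c)/2 / ((1/a+a)/2) ≤ (1 - (1-q*a)*(1-2*a)) := (div_le_iff₀ hden).2 key
  linarith

lemma ulog_diff (ℓ r y : ℝ) (hl : 0 < ℓ) (hlr : ℓ < r) (hy0 : 0 < y) (hy : y ≤ ℓ) :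
    y / (Real.sqrt r * Real.sqrt ℓ)
      ≤ Real.log ((Real.sqrt r + Real.sqrt ℓ)^2/(r-ℓ))
        - Real.log ((Real.sqrt (r-y) + Real.sqrt (ℓ-y))^2/(r-ℓ)) := by
  set sr := Real.sqrt r with hsr
  set sl := Real.sqrt ℓ with hsl
  set s' := Real.sqrt (r-y) with hs'
  set t' := Real.sqrt (ℓ-y) with ht'
  have hsr2 : sr^2 = r := Real.sq_sqrt (by linarith)
  have hsl2 : sl^2 = ℓ := Real.sq_sqrt hl.le
  have hs'2 : s'^2 = r - y := Real.sq_sqrt (by linarith)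
  have ht'2 : t'^2 = ℓ - y := Real.sq_sqrt (by linarith)
  have hsrp : 0 < sr := Real.sqrt_pos.2 (by linarith)
  have hslp : 0 < sl := Real.sqrt_pos.2 hl
  have hs'p : 0 < s' := Real.sqrt_pos.2 (by linarith)
  have ht'p : 0 ≤ t' := Real.sqrt_nonneg _
  have hss : s' ≤ sr := Real.sqrt_le_sqrt (by linarith)
  have htt : t' ≤ sl := Real.sqrt_le_sqrt (by linarith)
  have h1 : y ≤ (sr - s') * (2*sr) := by nlinarith
  have h2 : y ≤ (sl - t') * (2*sl) := by nlinarith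
  set a0 := sr + sl with ha0
  set ay := s' + t' with hay
  have ha0p : 0 < a0 := by positivity
  have hayp : 0 < ay := by positivity
  have key : y * (sr+sl) ≤ ((sr+sl) - (s'+t')) * (2*sr*sl) := by
    nlinarith [mul_le_mul_of_nonneg_right h1 hslp.le, mul_le_mul_of_nonneg_right h2 hsrp.le]
  have hlog : Real.log ay - Real.log a0 ≤ ay/a0 - 1 := by
    have := Real.log_le_sub_one_of_pos (div_pos hayp ha0p)
    rwa [Real.log_div (ne_of_gt hayp) (ne_of_gt ha0p)] at this
  have hfrac : y / (2*sr*sl) ≤ 1 - ay/a0 := by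
    rw [div_le_iff₀ (show (0:ℝ) < 2*sr*sl by positivity)]
    have e : 1 - ay/a0 = (a0 - ay)/a0 := by field_simp
    rw [e, div_mul_eq_mul_div, le_div_iff₀ ha0p]
    calc y * a0 ≤ ((sr+sl) - (s'+t')) * (2*sr*sl) := key
      _ = (a0 - ay) * (2*sr*sl) := by rw [ha0, hay]
  have hrl : (0:ℝ) < r - ℓ := by linarith
  have e1 : Real.log (a0^2/(r-ℓ)) = 2*Real.log a0 - Real.log (r-ℓ) := by
    rw [Real.log_div (by positivity) (ne_of_gt hrl), Real.log_pow]; push_cast; ring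
  have e2 : Real.log (ay^2/(r-ℓ)) = 2*Real.log ay - Real.log (r-ℓ) := by
    rw [Real.log_div (by positivity) (ne_of_gt hrl), Real.log_pow]; push_cast; ring
  rw [e1, e2]
  have : y / (sr*sl) = 2 * (y/(2*sr*sl)) := by field_simp
  rw [this]
  linarith

set_option maxHeartbeats 1000000 in
lemma final_numeric (ε K B v w : ℝ) (hε0 : 0 < ε) (hε : ε ≤ 1/3)
    (hK0 : 0 < K) (hKeps : ε ≤ K) (hKB : 4.7 ≤ K*B) (hB0 : 0 < B)
    (hv : v = Real.exp (-B)) (hw0 : 0 ≤ w) (hw : w ≤ ε^2/200) :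
    1 + 3*ε/4 ≤ (1+K)*((1-v)*(1-w)) := by
  have hv0 : 0 < v := hv ▸ Real.exp_pos _
  have hv1 : v < 1 := hv ▸ Real.exp_lt_one_iff.2 (by linarith)
  have hw1 : w < 1 := by nlinarith
  by_cases hcase : v ≤ ε/8
  · -- Case 1
    have h1 : 1 - ε/8 ≤ 1 - v := by linarith
    have h2 : 1 - ε^2/200 ≤ 1 - w := by linarith
    have h3 : (1+ε)*((1-ε/8)*(1-ε^2/200)) ≤ (1+K)*((1-v)*(1-w)) := by
      apply mul_le_mul (by linarith) _ (by nlinarith) (by linarith)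
      apply mul_le_mul h1 h2 (by nlinarith) (by linarith)
    nlinarith
  · push_neg at hcase
    by_cases hB1 : B ≤ 1
    · -- Case 2a
      have hvB : v * (1+B) ≤ 1 := by
        have h1 : 1 + B ≤ Real.exp B := by linarith [Real.add_one_le_exp B]
        have h2 : v * (1+B) ≤ v * Real.exp B := mul_le_mul_of_nonneg_left h1 hv0.le
        have h3 : v * Real.exp B = 1 := by rw [hv, ← Real.exp_add]; simp
        linarith
      have h8 : B ≤ 2*(1-v) := by nlinarith
      have hKv : 2.35 ≤ K*(1-v) := by nlinarith [mul_le_mul_of_nonneg_left h8 hK0.le]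
      have hwsmall : w ≤ 0.001 := by nlinarith
      have h9 : 2.35*(1-w) ≤ (K*(1-v))*(1-w) :=
        mul_le_mul_of_nonneg_right hKv (by linarith)
      linarith [h9, hwsmall, mul_nonneg (by linarith : (0:ℝ) ≤ 1-v) (by linarith : (0:ℝ) ≤ 1-w)]
    · -- Case 2b
      push_neg at hB1
      have hexp1 : Real.exp (-1 : ℝ) ≤ 0.368 := by
        rw [Real.exp_neg]
        rw [inv_le_comm₀ (Real.exp_pos 1) (by norm_num)]
        have := Real.exp_one_gt_d9
        norm_num
        linarith
      have hv37 : v ≤ 0.368 := by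
        rw [hv]
        calc Real.exp (-B) ≤ Real.exp (-1 : ℝ) := Real.exp_le_exp.2 (by linarith)
          _ ≤ 0.368 := hexp1
      have hBv : B*v ≤ 0.368 := by
        have h1 : B ≤ Real.exp (B-1) := by
          have := Real.add_one_le_exp (B-1); linarith
        have h2 : B * v ≤ Real.exp (B-1) * v := mul_le_mul_of_nonneg_right h1 hv0.le
        have h3 : Real.exp (B-1) * v = Real.exp (-1 : ℝ) := by
          rw [hv, ← Real.exp_add]; congr 1; ring
        linarith
      have hεv : ε < 8*v := by linarith
      have hw2 : w ≤ 0.32*v^2 := by nlinarith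
      have hx1 : (0:ℝ) < 1 - 1.12*v := by nlinarith
      have h9 : (7.12*v)*B ≤ (K*(1-1.12*v))*B := by
        linarith [mul_nonneg (by linarith : (0:ℝ) ≤ K*B - 4.7) hx1.le, hBv, hv37]
      have h10 : 7.12*v ≤ K*(1-1.12*v) :=
        le_of_mul_le_mul_right h9 hB0
      have hv2 : v*v ≤ 0.368*v := mul_le_mul_of_nonneg_right hv37 hv0.le
      have hstep1 : 1 - 1.12*v ≤ (1-v)*(1-w) := by
        linarith [hw2, hv2, mul_nonneg hv0.le hw0]
      have hstep2 : (1+K)*(1-1.12*v) ≤ (1+K)*((1-v)*(1-w)) :=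
        mul_le_mul_of_nonneg_left hstep1 (by linarith)
      have hstep3 : 1+6*v ≤ (1+K)*(1-1.12*v) := by nlinarith [h10]
      linarith

set_option maxHeartbeats 2000000 in
/-- Under Constraints I and IVb, if `ε ≤ 1/3` then `Φ(λ) ≥ 1 + 3ε/4` for
every `λ ∈ (0,1]`. -/
theorem phi_lower_bound (ℓ r : ℝ) (hℓ : 0 < ℓ) (hℓr : ℓ < r) (hr : r ≤ 1)
    (d : ℕ) (hd : 1 ≤ d) (ε : ℝ) (hε0 : 0 < ε) (hε : ε ≤ 1/3) (n : ℕ) (hn : 1 ≤ n)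
    (hCI : ConstraintI ℓ r d ε) (hCIVb : ConstraintIVb ℓ ε n) :
    ∀ lam ∈ Set.Ioc (0 : ℝ) 1, Phi ℓ r d ε n lam ≥ 1 + 3 * ε / 4 := by
  obtain ⟨h3l, hd4⟩ := hCI
  intro lam hlam
  obtain ⟨hlam0, hlam1⟩ := hlam
  have hr0 : (0:ℝ) < r := lt_trans hℓ hℓr
  have hrl : (0:ℝ) < r - ℓ := by linarith
  have hn0 : (0:ℝ) < n := by exact_mod_cast Nat.lt_of_lt_of_le Nat.zero_lt_one hn
  have hd1 : (1:ℝ) ≤ (d:ℝ) := by exact_mod_cast hd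
  set x := lam * ℓ with hxdef
  have hx0 : 0 < x := by positivity
  have hxl : x ≤ ℓ := by
    have h := mul_le_mul_of_nonneg_right hlam1 hℓ.le
    rw [one_mul] at h
    linarith [h]
  -- sqrt basics
  set sr := Real.sqrt r with hsrdef
  set sl := Real.sqrt ℓ with hsldef
  have hsrp : 0 < sr := Real.sqrt_pos.2 hr0
  have hslp : 0 < sl := Real.sqrt_pos.2 hℓ
  have hsr2 : sr^2 = r := Real.sq_sqrt hr0.le
  have hsl2 : sl^2 = ℓ := Real.sq_sqrt hℓ.le
  -- u values
  set u0 := Real.log ((sr + sl)^2/(r-ℓ)) with hu0def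
  set ux := Real.log ((Real.sqrt (r-x) + Real.sqrt (ℓ-x))^2/(r-ℓ)) with huxdef
  -- cosh identities
  have hcosh0 : Real.cosh u0 = psiMap ℓ r 0 := by
    have := cosh_log_g ℓ r 0 hℓ hℓr le_rfl hℓ.le
    simpa using this
  have hcoshx : Real.cosh ux = psiMap ℓ r x := cosh_log_g ℓ r x hℓ hℓr hx0.le hxl
  -- u(ℓ) = 0
  have hul : Real.log ((Real.sqrt (r-ℓ) + Real.sqrt (ℓ-ℓ))^2/(r-ℓ)) = 0 := by
    rw [sub_self, Real.sqrt_zero, add_zero, Real.sq_sqrt hrl.le, div_self (ne_of_gt hrl),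
      Real.log_one]
  -- lower bounds on u-differences
  have hdiff : x / (sr*sl) ≤ u0 - ux := ulog_diff ℓ r x hℓ hℓr hx0 hxl
  have hu0lb : ℓ / (sr*sl) ≤ u0 := by
    have := ulog_diff ℓ r ℓ hℓ hℓr hℓ le_rfl
    rw [hul] at this; linarith
  have hu00 : 0 ≤ u0 := le_trans (by positivity) hu0lb
  have hux0 : 0 ≤ ux := by
    apply Real.log_nonneg
    rw [le_div_iff₀ hrl, one_mul]
    have h1 : (Real.sqrt (r-x))^2 = r - x := Real.sq_sqrt (by linarith)
    have h2 : (Real.sqrt (ℓ-x))^2 = ℓ - x := Real.sq_sqrt (by linarith only [hxl])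
    nlinarith only [h1, h2, hℓr, hxl, hx0,
      mul_nonneg (Real.sqrt_nonneg (r-x)) (Real.sqrt_nonneg (ℓ-x))]
  -- cheb values
  have hcheb0 : cheb d (psiMap ℓ r 0) = Real.cosh ((d:ℝ)*u0) := by
    rw [← hcosh0, cheb_cosh]
  have hchebx : cheb d (psiMap ℓ r x) = Real.cosh ((d:ℝ)*ux) := by
    rw [← hcoshx, cheb_cosh]
  -- cDelta
  have harg : 1 + 2 * (ℓ / r) / (1 - ℓ / r) = psiMap ℓ r 0 := by
    unfold psiMap
    have h1 : (1:ℝ) - ℓ/r ≠ 0 := by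
      have : (1:ℝ) - ℓ/r = (r-ℓ)/r := by field_simp
      rw [this]; positivity
    field_simp
    ring
  have hdelta : cDelta ℓ r d = 1 / Real.cosh ((d:ℝ)*u0) := by
    rw [cDelta, harg, hcheb0]
  -- Qstar rewrite
  have hcoshA : 0 < Real.cosh ((d:ℝ)*u0) := Real.cosh_pos _
  have hQ : Qstar ℓ r d x = 1 - Real.cosh ((d:ℝ)*ux) / Real.cosh ((d:ℝ)*u0) := by
    rcases lt_or_eq_of_le hxl with hlt | heq
    · rw [Qstar, if_pos hlt, Pd, hdelta, hchebx]
      ring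
    · rw [Qstar, if_neg (by rw [heq]; exact lt_irrefl _), hdelta]
      rw [huxdef, heq, hul]
      norm_num
  -- A, C, B
  set A := (d:ℝ)*u0 with hAdef
  set C := (d:ℝ)*ux with hCdef
  have hC0 : 0 ≤ C := by positivity
  have hCA : C ≤ A := by
    have hxp : 0 < x / (sr*sl) := by positivity
    have hux_le : ux ≤ u0 := by linarith
    exact mul_le_mul_of_nonneg_left hux_le (by positivity)
  set B := A - C with hBdef
  have hQlb : (1 - Real.exp (-B)) * (1 - 2*Real.exp (-A)) ≤ Qstar ℓ r d x := by
    rw [hQ]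
    have := cosh_ratio_bound A C hC0 hCA
    rw [show C - A = -B by rw [hBdef]; ring] at this
    exact this
  -- numeric quantities
  set M := Real.log (20/ε) with hMdef
  have hM1 : Real.log (1/ε) ≤ M :=
    Real.log_le_log (by positivity) ((div_le_div_iff_of_pos_right hε0).2 (by norm_num))
  have hMpos : 0 < M := Real.log_pos (by rw [lt_div_iff₀ hε0]; linarith)
  have hlog1e : 0 < Real.log (1/ε) := Real.log_pos (by rw [lt_div_iff₀ hε0]; linarith)
  have hexpM : Real.exp (-M) = ε/20 := by
    rw [Real.exp_neg, hMdef, Real.exp_log (by positivity)]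
    field_simp
  -- sqrt constraint-I consequence
  have hsq : 2.3*(sr*sl) ≤ 4*Real.sqrt ((r-ℓ)/(2*ℓ))*ℓ := by
    have e3 : 4*Real.sqrt ((r-ℓ)/(2*ℓ))*ℓ = Real.sqrt (8*(r-ℓ)*ℓ) := by
      rw [show 8*(r-ℓ)*ℓ = ((r-ℓ)/(2*ℓ))*(4*ℓ)^2 by field_simp; ring,
        Real.sqrt_mul (by positivity), Real.sqrt_sq (by positivity)]
      ring
    have e4 : 2.3*(sr*sl) = Real.sqrt (5.29*(r*ℓ)) := by
      rw [show (5.29:ℝ)*(r*ℓ) = 2.3^2*(r*ℓ) by norm_num,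
        Real.sqrt_mul (by positivity), Real.sqrt_sq (by norm_num),
        Real.sqrt_mul hr0.le]
    rw [e3, e4]
    apply Real.sqrt_le_sqrt
    linarith only [mul_le_mul_of_nonneg_left h3l hℓ.le, mul_pos hℓ hℓ]
  have hda : 2.3*(sr*sl)*M ≤ (d:ℝ)*ℓ := by
    have h1 : 2.3*(sr*sl)*M ≤ (4*Real.sqrt ((r-ℓ)/(2*ℓ))*ℓ)*M :=
      mul_le_mul_of_nonneg_right hsq hMpos.le
    have h2 : (4*Real.sqrt ((r-ℓ)/(2*ℓ))*M)*ℓ ≤ (d:ℝ)*ℓ :=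
      mul_le_mul_of_nonneg_right hd4 hℓ.le
    have h3 : (4*Real.sqrt ((r-ℓ)/(2*ℓ))*ℓ)*M = (4*Real.sqrt ((r-ℓ)/(2*ℓ))*M)*ℓ := by ring
    linarith only [h1, h2, h3]
  have hsrsl : 0 < sr*sl := by positivity
  have hB_lb : 2.3*lam*M ≤ B := by
    have h1 : (d:ℝ) * (x/(sr*sl)) ≤ B := by
      rw [hBdef, hAdef, hCdef, ← mul_sub]
      apply mul_le_mul_of_nonneg_left hdiff (by positivity)
    have h2 : 2.3*lam*M ≤ (d:ℝ) * (x/(sr*sl)) := by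
      rw [mul_div_assoc', le_div_iff₀ hsrsl, hxdef]
      linarith only [mul_le_mul_of_nonneg_left hda hlam0.le]
    linarith only [h1, h2]
  have hA_lb : 2.3*M ≤ A := by
    have h1 : (d:ℝ) * (ℓ/(sr*sl)) ≤ A := by
      rw [hAdef]
      apply mul_le_mul_of_nonneg_left hu0lb (by positivity)
    have h2 : 2.3*M ≤ (d:ℝ) * (ℓ/(sr*sl)) := by
      rw [mul_div_assoc', le_div_iff₀ hsrsl]
      linarith only [hda]
    linarith only [h1, h2]
  have hB0 : 0 < B := lt_of_lt_of_le (by positivity) hB_lb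
  have hexpA : Real.exp (-A) ≤ (ε/20)^2 := by
    have h1 : Real.exp (-A) ≤ Real.exp (-(2*M)) := Real.exp_le_exp.2 (by linarith only [hA_lb, hMpos])
    have h2 : Real.exp (-(2*M)) = (ε/20)^2 := by
      rw [show -(2*M) = -M + -M by ring, Real.exp_add, hexpM]; ring
    linarith
  -- K bounds
  set L := Real.logb 2 (1/ε) with hLdef
  have hLeq : L = Real.log (1/ε) / Real.log 2 := by rw [hLdef, Real.logb]
  have hlog2 : (0.6931:ℝ) < Real.log 2 := by
    have := Real.log_two_gt_d9; linarith
  have hlog2' : Real.log 2 < 0.6932 := by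
    have := Real.log_two_lt_d9; linarith
  have hLpos : 0 < L := by
    rw [hLeq]; positivity
  set K := ε / (lam * ℓ * (n:ℝ)) with hKdef
  have hxn : 0 < lam * ℓ * (n:ℝ) := by positivity
  have hK0 : 0 < K := by positivity
  have hIVb : ℓ * (n:ℝ) ≤ ε * L / 3 := by
    have := hCIVb
    rw [ConstraintIVb] at this
    rw [← hLdef] at this
    have h2 : ℓ * (n:ℝ) ≤ ((1/3) * (ε/(n:ℝ)) * L) * (n:ℝ) := mul_le_mul_of_nonneg_right this hn0.le
    calc ℓ * (n:ℝ) ≤ ((1/3) * (ε/(n:ℝ)) * L) * (n:ℝ) := h2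
      _ = ε * L / 3 := by field_simp
  have hK : 3/(lam*L) ≤ K := by
    rw [hKdef, div_le_div_iff₀ (by positivity) hxn]
    linarith only [mul_le_mul_of_nonneg_left hIVb (by positivity : (0:ℝ) ≤ 3*lam)]
  have hKB : 4.7 ≤ K*B := by
    have h1 : (3/(lam*L)) * (2.3*lam*M) ≤ K * B :=
      mul_le_mul hK hB_lb (by positivity) hK0.le
    have h2 : (3/(lam*L)) * (2.3*lam*M) = 6.9 * M / L := by
      field_simp; ring
    rw [h2] at h1
    have h3 : 4.7 ≤ 6.9 * M / L := by
      rw [le_div_iff₀ hLpos, hLeq]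
      have key : 4.7 * (Real.log (1/ε) / Real.log 2) * Real.log 2 = 4.7 * Real.log (1/ε) := by
        field_simp
      nlinarith only [key, hM1, hMpos, hlog2, hlog1e, hLpos,
        mul_le_mul_of_nonneg_right (show (0.6931:ℝ) ≤ Real.log 2 by linarith only [hlog2]) hMpos.le]
    linarith only [h1, h3]
  have hKeps : ε ≤ K := by
    have h1 : 3/L ≤ 3/(lam*L) := by
      apply div_le_div_of_nonneg_left (by norm_num) (by positivity)
      nlinarith only [hlam1, hLpos]
    have h2 : ε ≤ 3/L := by
      rw [le_div_iff₀ hLpos, hLeq]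
      have h3 : Real.log (1/ε) ≤ 1/ε - 1 := Real.log_le_sub_one_of_pos (by positivity)
      have h4 : ε * (Real.log (1/ε)) ≤ 1 - ε := by
        have := mul_le_mul_of_nonneg_left h3 hε0.le
        calc ε * Real.log (1/ε) ≤ ε * (1/ε - 1) := this
          _ = 1 - ε := by field_simp
      calc ε * (Real.log (1/ε) / Real.log 2) = (ε * Real.log (1/ε)) / Real.log 2 := by ring
        _ ≤ (1 - ε)/ Real.log 2 :=
            (div_le_div_iff_of_pos_right (by linarith only [hlog2] : (0:ℝ) < Real.log 2)).2 h4
        _ ≤ 3 := by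
            rw [div_le_iff₀ (by linarith only [hlog2] : (0:ℝ) < Real.log 2)]
            nlinarith only [hlog2, hε0, hε]
    linarith only [h1, h2, hK]
  -- final assembly
  set v := Real.exp (-B) with hvdef
  set w := 2*Real.exp (-A) with hwdef
  have hv0 : 0 < v := Real.exp_pos _
  have hw0 : 0 < w := by positivity
  have hw : w ≤ ε^2/200 := by
    rw [hwdef]
    linarith only [hexpA]
  have hPhi : Phi ℓ r d ε n lam = (1 + K) * Qstar ℓ r d x := by
    rw [Phi, hKdef, hxdef]
  rw [ge_iff_le, hPhi]
  have hmain : (1+K) * ((1-v)*(1-w)) ≤ (1+K) * Qstar ℓ r d x :=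
    mul_le_mul_of_nonneg_left hQlb (by positivity)
  have hgoal : 1 + 3*ε/4 ≤ (1+K) * ((1-v)*(1-w)) :=
    final_numeric ε K B v w hε0 hε hK0 hKeps hKB hB0 hvdef hw0.le hw
  linarith only [hgoal, hmain]
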